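/- For all integers k ≥ 2 and n ≥ 2 − k, the k-generalized Lucas number satisfies |L_n^(k) − (2α − 1) f_k(α) α^(n−1)| < 3/2, where α is the dominant root of Ψ_k(x) and f_k(x) = (x − 1)/(2 + (k+1)(x − 2)). -/

import Mathlib

/-!
Put `c = (2α - 1) f_k(α)` and `e_j = L_j - c α^(j-1)`. Since `α` is a root of `Ψ_k`, `e` obeys
the `k`-bonacci recurrence for `j ≥ 2`. Because `(2 - α) α^k = 1`, for any such sequence the
defect `e_j - W_j`, where `W_j = ∑_{i<k} (2 - α) α^i e_(j-1-i)` is a convex combination of the `k`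
preceding terms, gets multiplied by `α` at each step; `c` is precisely the value making the defect
vanish at `j = 2`. Hence `e_j = W_j` for all `j ≥ 2`, so `|e_j|` stays below its maximum over the
initial window `2 - k ≤ j ≤ 1`, which is `< 3/2` because `1 ≤ c ≤ 2` and `α > 3/2`.
-/

open Finset

theorem sum_Icc_one_eq_sum_range {M : Type*} [AddCommMonoid M] (f : ℤ → M) (k : ℕ) :
    ∑ i ∈ Icc (1 : ℤ) k, f i = ∑ i ∈ range k, f (i + 1) := by
  rw [Int.Icc_eq_finset_map, sum_map]
  simp [add_comm]

theorem pow_mul_two_sub_eq_one {R : Type*} [CommRing R] {x : R} {k : ℕ}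
    (h : x ^ k = ∑ i ∈ range k, x ^ i) : x ^ k * (2 - x) = 1 := by
  have := geom_sum_mul x k
  rw [← h] at this
  linear_combination -this

theorem one_add_mul_le_sum_range_pow {R : Type*} [Semiring R] [PartialOrder R] [IsOrderedRing R]
    {x : R} (hx : 1 ≤ x) (k : ℕ) : 1 + k * x ≤ ∑ i ∈ range (k + 1), x ^ i := by
  induction k with
  | zero => simp
  | succ k ih =>
    rw [sum_range_succ, Nat.cast_succ, add_one_mul, ← add_assoc]
    exact add_le_add ih (le_self_pow₀ hx k.succ_ne_zero)

theorem zpow_eq_sum_range {K : Type*} [DivisionRing K] {α : K} (hα : α ≠ 0) {k : ℕ}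
    (h : α ^ k = ∑ i ∈ range k, α ^ i) (j : ℤ) :
    α ^ j = ∑ i ∈ range k, α ^ (j - 1 - i) := by
  have hterm : ∀ i ∈ range k, α ^ (j - 1 - i) = α ^ (k - 1 - i) * α ^ (j - k) := by
    intro i hi
    rw [← zpow_natCast, ← zpow_add₀ hα]
    congr 1
    have := mem_range.1 hi
    omega
  rw [sum_congr rfl hterm, ← sum_mul, sum_range_reflect (fun i => α ^ i), ← h,
    ← zpow_natCast, ← zpow_add₀ hα, add_sub_cancel]

theorem eq_weighted_sum_of_eq_sum {R : Type*} [CommRing R] {α : R} {k : ℕ} (hk : 0 < k)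
    (hα : α ^ k * (2 - α) = 1) {x : ℤ → R} {b : ℤ}
    (hrec : ∀ j, b ≤ j → x j = ∑ i ∈ range k, x (j - 1 - i))
    (hb : x b = ∑ i ∈ range k, (2 - α) * α ^ i * x (b - 1 - i)) :
    ∀ j, b ≤ j → x j = ∑ i ∈ range k, (2 - α) * α ^ i * x (j - 1 - i) := by
  obtain ⟨m, rfl⟩ : ∃ m, k = m + 1 := ⟨k - 1, by omega⟩
  refine Int.leInduction hb fun j hj ih => ?_
  have hshift (i : ℕ) : j - ((i + 1 : ℕ) : ℤ) = j - 1 - i := by push_cast; ring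
  have hnext := hrec (j + 1) (by omega)
  have hcur := hrec j hj
  rw [sum_range_succ'] at hnext ⊢
  rw [sum_range_succ] at ih hcur
  simp only [add_sub_cancel_right, hshift, Nat.cast_zero, sub_zero, pow_zero, mul_one]
    at hnext ⊢
  have hfactor : ∑ i ∈ range m, (2 - α) * α ^ (i + 1) * x (j - 1 - i)
      = α * ∑ i ∈ range m, (2 - α) * α ^ i * x (j - 1 - i) := by
    rw [mul_sum]; exact sum_congr rfl fun _ _ => by ring
  rw [hfactor]
  -- both sides equal `2 x j - x (j - k)`
  linear_combination hnext - hcur + α * ih + x (j - 1 - m) * hα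

theorem sub_mul_zpow_sub_one_eq_sum {K : Type*} [DivisionRing K] {α : K} (hα : α ≠ 0) {k : ℕ}
    (hroot : α ^ k = ∑ i ∈ range k, α ^ i) {x : ℤ → K} {b : ℤ}
    (hx : ∀ j, b ≤ j → x j = ∑ i ∈ range k, x (j - 1 - i)) (c : K) :
    ∀ j, b ≤ j →
      x j - c * α ^ (j - 1) = ∑ i ∈ range k, (x (j - 1 - i) - c * α ^ (j - 1 - i - 1)) := by
  intro j hj
  rw [hx j hj, zpow_eq_sum_range hα hroot (j - 1), mul_sum, ← sum_sub_distrib]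
  simp only [sub_right_comm _ (1 : ℤ)]

theorem abs_lt_of_eq_weighted_sum {R : Type*} [Ring R] [LinearOrder R] [IsStrictOrderedRing R]
    {k : ℕ} {w : ℕ → R} (hw : ∀ i < k, 0 < w i)
    (hsum : ∑ i ∈ range k, w i = 1) {x : ℤ → R} {B : R} {a : ℤ}
    (hrec : ∀ j, a + k ≤ j → x j = ∑ i ∈ range k, w i * x (j - 1 - i))
    (hinit : ∀ j, a ≤ j → j < a + k → |x j| < B) :
    ∀ j, a ≤ j → |x j| < B := by
  have hk : (range k).Nonempty := nonempty_range_iff.2 fun h => by simp [h] at hsum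
  suffices ∀ n : ℕ, ∀ j, a ≤ j → j < a + n → |x j| < B from
    fun j hj => this ((j - a).toNat + 1) j hj (by omega)
  intro n
  induction n with
  | zero => intro j h1 h2; omega
  | succ n ih =>
    intro j h1 h2
    rcases lt_or_ge j (a + n) with hlt | -
    · exact ih j h1 hlt
    rcases lt_or_ge j (a + k) with hwin | hk'
    · exact hinit j h1 hwin
    rw [hrec j hk']
    calc |∑ i ∈ range k, w i * x (j - 1 - i)|
        ≤ ∑ i ∈ range k, w i * |x (j - 1 - i)| := by
          refine (abs_sum_le_sum_abs _ _).trans_eq (sum_congr rfl fun i hi => ?_)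
          rw [abs_mul, abs_of_pos (hw i (mem_range.1 hi))]
      _ < ∑ i ∈ range k, w i * B := by
          refine sum_lt_sum_of_nonempty hk fun i hi => ?_
          have hi := mem_range.1 hi
          exact mul_lt_mul_of_pos_left (ih _ (by omega) (by omega)) (hw i hi)
      _ = B := by rw [← sum_mul, hsum, one_mul]

/-- The constant `c = (2α - 1) f_k(α)`. -/
noncomputable def lucasCoeff (k : ℕ) (α : ℝ) : ℝ :=
  (2 * α - 1) * ((α - 1) / (2 + (k + 1) * (α - 2)))

section
variable {k : ℕ} {α : ℝ}

theorem lucasCoeff_mul_denom (hD : 2 + (k + 1) * (α - 2) ≠ 0) :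
    lucasCoeff k α * (2 + (k + 1) * (α - 2)) = (2 * α - 1) * (α - 1) := by
  rw [lucasCoeff, mul_div_assoc', div_mul_cancel₀ _ hD]

theorem mul_two_sub_lt_one (hk : 2 ≤ k) (hα1 : 1 < α) (hα2 : α < 2)
    (hkey : α ^ k * (2 - α) = 1) (hlow : 1 + (k - 1) * α ≤ α ^ k) : k * (2 - α) < 1 := by
  have hk' : (2 : ℝ) ≤ k := by exact_mod_cast hk
  nlinarith

theorem lucasCoeff_denom_pos (hk : 2 ≤ k) (hkε : k * (2 - α) < 1) :
    0 < 2 + (k + 1) * (α - 2) := by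
  have hk' : (2 : ℝ) ≤ k := by exact_mod_cast hk
  nlinarith

theorem lucasCoeff_mem_Icc (hk : 2 ≤ k) (hα1 : 1 < α) (hα2 : α < 2)
    (hkey : α ^ k * (2 - α) = 1) (hlow : 1 + (k - 1) * α ≤ α ^ k) :
    lucasCoeff k α ∈ Set.Icc 1 2 := by
  have hk' : (2 : ℝ) ≤ k := by exact_mod_cast hk
  have hkε := mul_two_sub_lt_one hk hα1 hα2 hkey hlow
  have hD := lucasCoeff_denom_pos hk hkε
  have hlow' : (2 - α) * (1 + (k - 1) * α) ≤ 1 := by nlinarith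
  rw [lucasCoeff, mul_div_assoc', Set.mem_Icc, le_div_iff₀ hD, div_le_iff₀ hD]
  constructor <;> nlinarith

theorem abs_lucas_sub_lt_of_le_one {L : ℤ → ℤ}
    (hinit : ∀ j : ℤ, 2 - (k : ℤ) ≤ j → j ≤ -1 → L j = 0) (hL0 : L 0 = 2) (hL1 : L 1 = 1)
    (hα1 : 3 / 2 < α) (hα2 : α < 2) {c : ℝ} (hc : c ∈ Set.Icc 1 2) {j : ℤ} (hj1 : 2 - k ≤ j)
    (hj2 : j ≤ 1) : |(L j : ℝ) - c * α ^ (j - 1)| < 3 / 2 := by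
  obtain ⟨hc1, hc2⟩ := hc
  have hα0 : 0 < α := by linarith
  obtain rfl | rfl | hneg : j = 1 ∨ j = 0 ∨ j ≤ -1 := by omega
  · rw [hL1, Int.cast_one, sub_self, zpow_zero, mul_one, abs_lt]; constructor <;> linarith
  · have : 1 / 2 < c / α ∧ c / α < 2 := by
      rw [lt_div_iff₀ hα0, div_lt_iff₀ hα0]; constructor <;> nlinarith
    rw [hL0, zero_sub, zpow_neg_one, ← div_eq_mul_inv, abs_lt]; push_cast
    constructor <;> linarith
  · have hpow : α ^ (j - 1) ≤ α ^ (-2 : ℤ) := zpow_le_zpow_right₀ (by linarith) (by omega)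
    have hsq : c * α ^ (-2 : ℤ) < 3 / 2 := by
      rw [zpow_neg, zpow_two, ← div_eq_mul_inv, div_lt_iff₀ (by positivity)]; nlinarith
    rw [hinit j hj1 hneg, Int.cast_zero, zero_sub, abs_neg, abs_of_pos (by positivity)]
    nlinarith

theorem sum_range_mul_lucas_below_two {L : ℤ → ℤ} (hk : 2 ≤ k)
    (hinit : ∀ j : ℤ, 2 - (k : ℤ) ≤ j → j ≤ -1 → L j = 0) (hL0 : L 0 = 2) (hL1 : L 1 = 1)
    (v : ℕ → ℝ) : ∑ i ∈ range k, v i * L (2 - 1 - i) = v 0 + 2 * v 1 := by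
  rw [sum_eq_add_of_mem 0 1 (by simp; omega) (by simp; omega) zero_ne_one]
  · norm_num [hL0, hL1]; ring
  · intro i hi hi01
    have := mem_range.1 hi
    rw [hinit _ (by omega) (by omega), Int.cast_zero, mul_zero]

theorem lucas_sub_eq_weighted_sum_two {L : ℤ → ℤ} (hk : 2 ≤ k)
    (hinit : ∀ j : ℤ, 2 - (k : ℤ) ≤ j → j ≤ -1 → L j = 0) (hL0 : L 0 = 2) (hL1 : L 1 = 1)
    (hL2 : L 2 = ∑ i ∈ range k, L (2 - 1 - i)) (hα : α ≠ 0) {c : ℝ}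
    (hc : c * (2 + (k + 1) * (α - 2)) = (2 * α - 1) * (α - 1)) :
    (L 2 : ℝ) - c * α ^ (2 - 1 : ℤ) =
      ∑ i ∈ range k, (2 - α) * α ^ i * ((L (2 - 1 - i) : ℝ) - c * α ^ (2 - 1 - (i : ℤ) - 1)) := by
  have hL2' : (L 2 : ℝ) = 3 := by
    have h := sum_range_mul_lucas_below_two hk hinit hL0 hL1 1
    norm_num at h
    rw [hL2]; push_cast; linarith
  have hpow : ∀ i ∈ range k, (2 - α) * α ^ i * α ^ (2 - 1 - (i : ℤ) - 1) = 2 - α := by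
    intro i _
    rw [mul_assoc, ← zpow_natCast, ← zpow_add₀ hα,
      show (i : ℤ) + (2 - 1 - i - 1) = 0 by ring, zpow_zero, mul_one]
  have hsplit :
      ∑ i ∈ range k, (2 - α) * α ^ i * ((L (2 - 1 - i) : ℝ) - c * α ^ (2 - 1 - (i : ℤ) - 1))
      = ∑ i ∈ range k, (2 - α) * α ^ i * L (2 - 1 - i)
        - c * ∑ i ∈ range k, (2 - α) * α ^ i * α ^ (2 - 1 - (i : ℤ) - 1) := by
    rw [mul_sum, ← sum_sub_distrib]
    exact sum_congr rfl fun i _ => by ring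
  rw [hsplit, sum_congr rfl hpow, sum_range_mul_lucas_below_two hk hinit hL0 hL1, sum_const,
    card_range, nsmul_eq_mul, hL2', show (2 - 1 : ℤ) = 1 by norm_num, zpow_one]
  linear_combination -hc
end

/-- For k ≥ 2 and n ≥ 2 − k, |L_n^(k) − (2α − 1) f_k(α) α^(n−1)| < 3/2, where α
    is the dominant root of Ψ_k and f_k(x) = (x − 1)/(2 + (k+1)(x − 2)). -/
theorem lucas_binet_error (k : ℕ) (hk : 2 ≤ k) (L : ℤ → ℤ)
    (hinit : ∀ j : ℤ, 2 - (k : ℤ) ≤ j → j ≤ -1 → L j = 0)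
    (hL0 : L 0 = 2) (hL1 : L 1 = 1)
    (hrec : ∀ n : ℤ, 2 ≤ n → L n = ∑ i ∈ Finset.Icc (1 : ℤ) (k : ℤ), L (n - i))
    (α : ℝ) (hα1 : 1 < α) (hα2 : α < 2)
    (hroot : α ^ k = ∑ i ∈ Finset.range k, α ^ i)
    (n : ℤ) (hn : 2 - (k : ℤ) ≤ n) :
    |(L n : ℝ) - (2 * α - 1) * ((α - 1) / (2 + (k + 1) * (α - 2))) * α ^ (n - 1)| < 3 / 2 := by
  have hα0 : α ≠ 0 := by positivity
  have hkey := pow_mul_two_sub_eq_one hroot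
  have hlow : 1 + (k - 1 : ℝ) * α ≤ α ^ k := by
    obtain ⟨m, rfl⟩ : ∃ m, k = m + 1 := ⟨k - 1, by omega⟩
    simpa [hroot] using one_add_mul_le_sum_range_pow hα1.le m
  have hkε := mul_two_sub_lt_one hk hα1 hα2 hkey hlow
  have hα32 : 3 / 2 < α := by
    have hk' : (2 : ℝ) ≤ k := by exact_mod_cast hk
    nlinarith
  have hLrec : ∀ j, 2 ≤ j → L j = ∑ i ∈ range k, L (j - 1 - i) := fun j hj => by
    rw [hrec j hj, sum_Icc_one_eq_sum_range]
    exact sum_congr rfl fun i _ => by rw [sub_add_eq_sub_sub_swap]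
  have herr := sub_mul_zpow_sub_one_eq_sum hα0 hroot (x := fun j => (L j : ℝ)) (b := 2)
    (fun j hj => by simp [hLrec j hj]) (lucasCoeff k α)
  have hconv := eq_weighted_sum_of_eq_sum (by omega) hkey herr
    (lucas_sub_eq_weighted_sum_two hk hinit hL0 hL1 (hLrec 2 le_rfl) hα0
      (lucasCoeff_mul_denom (lucasCoeff_denom_pos hk hkε).ne'))
  have hwindow (j : ℤ) (hj1 : 2 - (k : ℤ) ≤ j) (hj2 : j < 2 - k + k) :
      |(L j : ℝ) - lucasCoeff k α * α ^ (j - 1)| < 3 / 2 :=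
    abs_lucas_sub_lt_of_le_one hinit hL0 hL1 hα32 hα2
      (lucasCoeff_mem_Icc hk hα1 hα2 hkey hlow) hj1 (by omega)
  have hweights : ∑ i ∈ range k, (2 - α) * α ^ i = 1 := by
    rw [← mul_sum, ← hroot, mul_comm, hkey]
  exact abs_lt_of_eq_weighted_sum (w := fun i => (2 - α) * α ^ i) (fun i _ => by positivity)
    hweights (by simpa using hconv) hwindow n hn
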